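/- For every natural number n ≥ 1, (2/n)·H(n−1)·F(n) = Σ_{i=1}^{n−1} ( L(i)·F(n−i) ) / ( i·(n−i) ), where H(n) = Σ_{k=1}^{n} 1/k is the n-th harmonic number (H(0) = 0). -/

import Mathlib

/-! Since `2 F(m + k) = L(m) F(k) + F(m) L(k)`, the terms `i` and `n - i` of the sum add up to
`2 F(n) / (i (n - i))`, so twice the sum is `2 F(n) ∑ 1 / (i (n - i))`. Pairing the terms of
`∑ i / (i (n - i)) = H(n - 1)` in the same way, with numerators `i + (n - i) = n`, gives
`∑ 1 / (i (n - i)) = 2 H(n - 1) / n`. -/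

noncomputable def genFib (a b : ℝ) : ℕ → ℝ
  | 0 => 0
  | 1 => 1
  | n + 2 => a * genFib a b (n + 1) + b * genFib a b n

noncomputable def genLuc (a b : ℝ) : ℕ → ℝ
  | 0 => 2
  | 1 => a
  | n + 2 => a * genLuc a b (n + 1) + b * genLuc a b n

noncomputable def harmonicR (n : ℕ) : ℝ := ∑ k ∈ Finset.Icc 1 n, (1 : ℝ) / k

open Finset

section GenFib

variable (a b : ℝ)

lemma genFib_add_two (n : ℕ) :
    genFib a b (n + 2) = a * genFib a b (n + 1) + b * genFib a b n := rfl

lemma genLuc_add_two (n : ℕ) :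
    genLuc a b (n + 2) = a * genLuc a b (n + 1) + b * genLuc a b n := rfl

lemma genLuc_eq_two_mul_genFib_succ_sub (k : ℕ) :
    genLuc a b k = 2 * genFib a b (k + 1) - a * genFib a b k := by
  induction k using Nat.twoStepInduction with
  | zero => simp [genLuc, genFib]
  | one => simp [genLuc, genFib]; ring
  | more k ih₀ ih₁ =>
    rw [genLuc_add_two, ih₀, ih₁, genFib_add_two a b (k + 1), genFib_add_two a b k]
    ring

lemma two_mul_genFib_add (m k : ℕ) :
    2 * genFib a b (m + k) = genLuc a b m * genFib a b k + genFib a b m * genLuc a b k := by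
  induction m using Nat.twoStepInduction with
  | zero => simp [genLuc, genFib]
  | one =>
    rw [add_comm, genLuc_eq_two_mul_genFib_succ_sub a b k]
    simp [genLuc, genFib]
  | more m ih₀ ih₁ =>
    rw [show m + 2 + k = m + k + 2 by omega, genFib_add_two, genLuc_add_two, genFib_add_two a b m,
      show m + k + 1 = m + 1 + k by omega]
    linear_combination a * ih₁ + b * ih₀

end GenFib

lemma sum_Ico_one_reflect {M : Type*} [AddCommMonoid M] (n : ℕ) (f : ℕ → M) :
    ∑ i ∈ Ico 1 n, f (n - i) = ∑ i ∈ Ico 1 n, f i := by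
  rcases n with _ | n
  · simp
  · simpa using sum_Ico_reflect f 1 (Nat.le_succ (n + 1))

lemma two_mul_sum_Ico_one_of_add_reflect {R : Type*} [CommSemiring R] {n : ℕ} {f w : ℕ → R}
    (c : R) (hw : ∀ i ∈ Ico 1 n, w (n - i) = w i) (hf : ∀ i ∈ Ico 1 n, f i + f (n - i) = c) :
    2 * ∑ i ∈ Ico 1 n, f i * w i = c * ∑ i ∈ Ico 1 n, w i := by
  calc 2 * ∑ i ∈ Ico 1 n, f i * w i
      = ∑ i ∈ Ico 1 n, f i * w i + ∑ i ∈ Ico 1 n, f (n - i) * w (n - i) := by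
        rw [sum_Ico_one_reflect n (fun i ↦ f i * w i), two_mul]
    _ = ∑ i ∈ Ico 1 n, (f i + f (n - i)) * w i := by
        rw [← sum_add_distrib]
        exact sum_congr rfl fun i hi ↦ by rw [hw i hi, add_mul]
    _ = c * ∑ i ∈ Ico 1 n, w i := by
        rw [mul_sum]
        exact sum_congr rfl fun i hi ↦ by rw [hf i hi]

lemma natCast_sub_of_mem_Ico_one {n i : ℕ} (hi : i ∈ Ico 1 n) :
    ((n - i : ℕ) : ℝ) = n - i :=
  Nat.cast_sub (mem_Ico.1 hi).2.le

lemma inv_mul_sub_reflect {n i : ℕ} (hi : i ∈ Ico 1 n) :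
    (((n - i : ℕ) : ℝ) * (n - ((n - i : ℕ) : ℝ)))⁻¹ = ((i : ℝ) * (n - i))⁻¹ := by
  rw [natCast_sub_of_mem_Ico_one hi, sub_sub_cancel, mul_comm]

lemma harmonicR_sub_one (n : ℕ) : harmonicR (n - 1) = ∑ i ∈ Ico 1 n, (i : ℝ)⁻¹ := by
  rcases n with _ | n
  · simp [harmonicR]
  · simp [harmonicR, ← Ico_add_one_right_eq_Icc]

lemma sum_Ico_one_inv_mul_sub (n : ℕ) :
    ∑ i ∈ Ico 1 n, ((i : ℝ) * (n - i))⁻¹ = 2 / n * harmonicR (n - 1) := by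
  rcases Nat.eq_zero_or_pos n with rfl | hn
  · simp
  have hpair := two_mul_sum_Ico_one_of_add_reflect (n := n) (f := fun i ↦ (i : ℝ))
    (w := fun i ↦ ((i : ℝ) * (n - i))⁻¹) n (fun i hi ↦ inv_mul_sub_reflect hi)
    (fun i hi ↦ by simp only [natCast_sub_of_mem_Ico_one hi]; ring)
  have hterm : ∀ i ∈ Ico 1 n, (i : ℝ) * ((i : ℝ) * (n - i))⁻¹ = ((n - i : ℕ) : ℝ)⁻¹ := by
    intro i hi
    have hi₀ : (i : ℝ) ≠ 0 := by exact_mod_cast (Nat.one_le_iff_ne_zero.1 (mem_Ico.1 hi).1)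
    rw [natCast_sub_of_mem_Ico_one hi]
    field_simp
  rw [sum_congr rfl hterm, sum_Ico_one_reflect n (fun i ↦ (i : ℝ)⁻¹),
    ← harmonicR_sub_one] at hpair
  have hn' : (n : ℝ) ≠ 0 := by positivity
  rw [div_mul_eq_mul_div, eq_div_iff hn', mul_comm]
  exact hpair.symm

theorem genFib_harmonic_identity_general (a b : ℝ) (n : ℕ) :
    (2 / (n : ℝ)) * harmonicR (n - 1) * genFib a b n =
      ∑ i ∈ Finset.Ico 1 n,
        genLuc a b i * genFib a b (n - i) / ((i : ℝ) * ((n : ℝ) - (i : ℝ))) := by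
  have hpair := two_mul_sum_Ico_one_of_add_reflect (n := n)
    (f := fun i ↦ genLuc a b i * genFib a b (n - i)) (w := fun i ↦ ((i : ℝ) * (n - i))⁻¹)
    (2 * genFib a b n) (fun i hi ↦ inv_mul_sub_reflect hi) fun i hi ↦ by
      have hin := (mem_Ico.1 hi).2.le
      have h := two_mul_genFib_add a b i (n - i)
      rw [Nat.add_sub_cancel' hin] at h
      rw [Nat.sub_sub_self hin]
      linear_combination -h
  simp only [← div_eq_mul_inv, sum_Ico_one_inv_mul_sub] at hpair
  linarith

theorem genFib_harmonic_identity (a b : ℝ) (n : ℕ) (hn : 1 ≤ n) :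
    (2 / (n : ℝ)) * harmonicR (n - 1) * genFib a b n =
      ∑ i ∈ Finset.Ico 1 n,
        genLuc a b i * genFib a b (n - i) / ((i : ℝ) * ((n : ℝ) - (i : ℝ))) :=
  genFib_harmonic_identity_general a b n
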